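/- Let G be a finite simple graph with an odd number of vertices and let e = uv be an edge of G that is contained in every odd matching of G. Then G is reconfigurable if and only if the graph G − u − v obtained by deleting both vertices u and v is reconfigurable. -/

import Mathlib

/-- A vertex `v` is covered by the matching `M` if some edge of `M` contains it. -/
def Covers {V : Type*} (M : Set (Sym2 V)) (v : V) : Prop := ∃ e ∈ M, v ∈ e

/-- `M` is a matching of `G`: a set of edges of `G`, no two of which share a vertex. -/
def IsMatchingOn {V : Type*} (G : SimpleGraph V) (M : Set (Sym2 V)) : Prop :=
  M ⊆ G.edgeSet ∧ ∀ e ∈ M, ∀ f ∈ M, e ≠ f → ∀ v : V, v ∈ e → v ∉ f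

/-- `M` is an odd matching of `G`: a matching such that exactly one vertex is uncovered. -/
def IsOddMatching {V : Type*} (G : SimpleGraph V) (M : Set (Sym2 V)) : Prop :=
  IsMatchingOn G M ∧ ∃! v : V, ¬ Covers M v

/-- A flip transforms the odd matching `M` with isolated vertex `u` into
`M' = (M \ {vw}) ∪ {uv}`, where `uv` is an edge of `G` and `vw` is an edge of `M`. -/
def Flip {V : Type*} (G : SimpleGraph V) (M M' : Set (Sym2 V)) : Prop :=
  IsOddMatching G M ∧
  ∃ u v w : V, ¬ Covers M u ∧ s(u, v) ∈ G.edgeSet ∧ s(v, w) ∈ M ∧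
    M' = (M \ {s(v, w)}) ∪ {s(u, v)}

/-- `M` can be reconfigured to `M'` by some finite sequence of flips. -/
def Reconfig {V : Type*} (G : SimpleGraph V) (M M' : Set (Sym2 V)) : Prop :=
  Relation.ReflTransGen (Flip G) M M'

/-- `G` is reconfigurable: every odd matching can be reconfigured to every other one. -/
def Reconfigurable {V : Type*} (G : SimpleGraph V) : Prop :=
  ∀ M M' : Set (Sym2 V), IsOddMatching G M → IsOddMatching G M' → Reconfig G M M'

/-- `M` can be transformed into `M'` by a flip sequence of length exactly `k`. -/
def FlipSeq {V : Type*} (G : SimpleGraph V) (M M' : Set (Sym2 V)) (k : ℕ) : Prop :=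
  ∃ f : ℕ → Set (Sym2 V), f 0 = M ∧ f k = M' ∧ ∀ i < k, Flip G (f i) (f (i + 1))

/-- The graph obtained from `G` by deleting the vertex set `s` has a perfect matching:
a matching of `G` avoiding the vertices of `s` and covering all other vertices. -/
def HasPerfectMatchingAvoiding {V : Type*} (G : SimpleGraph V) (s : Set V) : Prop :=
  ∃ M : Set (Sym2 V), IsMatchingOn G M ∧ (∀ e ∈ M, ∀ v : V, v ∈ e → v ∉ s) ∧
    ∀ v : V, v ∉ s → Covers M v

/-! Since `uv` lies in every odd matching of `G`, deleting it is a bijection from the odd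
matchings of `G` onto those of `G - u - v`, inverse to adding it back. A flip of `G` never
removes `uv`, because the flipped matching is again odd and must contain `uv`; so flips of `G`
are exactly the flips of `G - u - v` transported along this bijection, and flip sequences
correspond in both directions. -/

section

variable {V : Type*} {G : SimpleGraph V}

theorem IsMatchingOn.eq_of_mem {M : Set (Sym2 V)} (hM : IsMatchingOn G M) {e f : Sym2 V}
    (he : e ∈ M) (hf : f ∈ M) {w : V} (hwe : w ∈ e) (hwf : w ∈ f) : e = f :=
  by_contra fun hef ↦ hM.2 e he f hf hef w hwe hwf

theorem IsMatchingOn.mono {M N : Set (Sym2 V)} (hM : IsMatchingOn G M) (hNM : N ⊆ M) :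
    IsMatchingOn G N :=
  ⟨hNM.trans hM.1, fun e he f hf ↦ hM.2 e (hNM he) f (hNM hf)⟩

theorem IsMatchingOn.insert {M : Set (Sym2 V)} (hM : IsMatchingOn G M) {g : Sym2 V}
    (hg : g ∈ G.edgeSet) (hdisj : ∀ e ∈ M, ∀ w ∈ g, w ∉ e) :
    IsMatchingOn G (insert g M) := by
  refine ⟨Set.insert_subset hg hM.1, ?_⟩
  rintro e (rfl | he) f (rfl | hf) hef w hwe
  · exact absurd rfl hef
  · exact hdisj f hf w hwe
  · exact fun hwf ↦ hdisj e he w hwf hwe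
  · exact hM.2 e he f hf hef w hwe

theorem IsOddMatching.covers_of_ne {M : Set (Sym2 V)} (hM : IsOddMatching G M) {x w : V}
    (hx : ¬ Covers M x) (hw : w ≠ x) : Covers M w :=
  by_contra fun hcw ↦ hw (hM.2.unique hcw hx)

theorem Flip.isOddMatching {M M' : Set (Sym2 V)} (h : Flip G M M') : IsOddMatching G M' := by
  obtain ⟨hM, x, y, z, hx, hxy, hyz, rfl⟩ := h
  have hxz : x ≠ z := fun h ↦ hx ⟨s(y, z), hyz, h ▸ Sym2.mem_mk_right y z⟩
  have hy_ne_z : y ≠ z := G.ne_of_adj (hM.1.1 hyz)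
  have hmatch : IsMatchingOn G (M \ {s(y, z)} ∪ {s(x, y)}) := by
    rw [Set.union_singleton]
    refine (hM.1.mono Set.sdiff_subset).insert hxy ?_
    rintro e ⟨he, hne⟩ w hw hwe
    rcases Sym2.mem_iff.mp hw with rfl | rfl
    · exact hx ⟨e, he, hwe⟩
    · exact hne (hM.1.eq_of_mem he hyz hwe (Sym2.mem_mk_left _ _))
  refine ⟨hmatch, z, ?_, fun w hw ↦ by_contra fun hwz ↦ hw ?_⟩
  · rintro ⟨f, ⟨hf, hne⟩ | rfl, hzf⟩
    · exact hne (hM.1.eq_of_mem hf hyz hzf (Sym2.mem_mk_right _ _))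
    · rcases Sym2.mem_iff.mp hzf with h | h
      exacts [hxz h.symm, hy_ne_z h.symm]
  · by_cases hwxy : w = x ∨ w = y
    · exact ⟨s(x, y), Or.inr rfl, Sym2.mem_iff.mpr hwxy⟩
    · push Not at hwxy
      obtain ⟨f, hf, hwf⟩ := hM.covers_of_ne hx hwxy.1
      refine ⟨f, Or.inl ⟨hf, ?_⟩, hwf⟩
      rintro rfl
      rcases Sym2.mem_iff.mp hwf with h | h
      exacts [hwxy.2 h, hwz h]

theorem Sym2.mem_map_subtypeVal {s : Set V} {e : Sym2 s} {w : s} :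
    (w : V) ∈ e.map Subtype.val ↔ w ∈ e := by
  refine ⟨fun h ↦ ?_, fun h ↦ Sym2.mem_map.mpr ⟨w, h, rfl⟩⟩
  obtain ⟨a, ha, haw⟩ := Sym2.mem_map.mp h
  exact Subtype.val_injective haw ▸ ha

theorem Sym2.exists_map_subtypeVal_eq {s : Set V} (f : Sym2 V) (hf : ∀ w ∈ f, w ∈ s) :
    ∃ e : Sym2 s, e.map Subtype.val = f := by
  induction f using Sym2.inductionOn with
  | hf a b =>
    exact ⟨s(⟨a, hf a (Sym2.mem_mk_left a b)⟩, ⟨b, hf b (Sym2.mem_mk_right a b)⟩), rfl⟩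

theorem map_subtypeVal_mem_edgeSet_iff {s : Set V} {e : Sym2 s} :
    e.map Subtype.val ∈ G.edgeSet ↔ e ∈ (G.induce s).edgeSet :=
  (SimpleGraph.Embedding.induce s).map_mem_edgeSet_iff

variable {u v : V}

theorem mem_compl_pair_of_not_covers {M : Set (Sym2 V)} (huvM : s(u, v) ∈ M) {x : V}
    (hx : ¬ Covers M x) : x ∈ ({u, v}ᶜ : Set V) := by
  rintro (rfl | rfl)
  exacts [hx ⟨_, huvM, Sym2.mem_mk_left _ _⟩, hx ⟨_, huvM, Sym2.mem_mk_right _ _⟩]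

theorem IsMatchingOn.mem_compl_pair {M : Set (Sym2 V)} (hM : IsMatchingOn G M)
    (huvM : s(u, v) ∈ M) {f : Sym2 V} (hf : f ∈ M) (hne : f ≠ s(u, v)) {w : V}
    (hw : w ∈ f) : w ∈ ({u, v}ᶜ : Set V) := by
  rintro (rfl | rfl)
  exacts [hne (hM.eq_of_mem hf huvM hw (Sym2.mem_mk_left _ _)),
    hne (hM.eq_of_mem hf huvM hw (Sym2.mem_mk_right _ _))]

theorem map_subtypeVal_ne_pair (e : Sym2 ({u, v}ᶜ : Set V)) : e.map Subtype.val ≠ s(u, v) := by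
  intro h
  obtain ⟨a, -, hau⟩ := Sym2.mem_map.mp (h ▸ Sym2.mem_mk_left u v)
  exact a.2 (Or.inl hau)

def insertEdge (u v : V) (N : Set (Sym2 ({u, v}ᶜ : Set V))) : Set (Sym2 V) :=
  insert s(u, v) (Sym2.map Subtype.val '' N)

def eraseEdge (u v : V) (M : Set (Sym2 V)) : Set (Sym2 ({u, v}ᶜ : Set V)) :=
  Sym2.map Subtype.val ⁻¹' M

theorem eraseEdge_insertEdge (N : Set (Sym2 ({u, v}ᶜ : Set V))) :
    eraseEdge u v (insertEdge u v N) = N := by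
  ext e
  simp only [eraseEdge, insertEdge, Set.mem_preimage, Set.mem_insert_iff,
    map_subtypeVal_ne_pair, false_or, (Sym2.map.injective Subtype.val_injective).mem_set_image]

theorem insertEdge_eraseEdge {M : Set (Sym2 V)} (hM : IsMatchingOn G M) (huvM : s(u, v) ∈ M) :
    insertEdge u v (eraseEdge u v M) = M := by
  refine Set.insert_subset huvM (Set.image_preimage_subset _ _) |>.antisymm fun f hf ↦ ?_
  by_cases hne : f = s(u, v)
  · exact Or.inl hne
  · obtain ⟨e, rfl⟩ := Sym2.exists_map_subtypeVal_eq f fun w ↦ hM.mem_compl_pair huvM hf hne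
    exact Or.inr ⟨e, hf, rfl⟩

theorem covers_insertEdge_iff {N : Set (Sym2 ({u, v}ᶜ : Set V))} {w : ({u, v}ᶜ : Set V)} :
    Covers (insertEdge u v N) w ↔ Covers N w := by
  constructor
  · rintro ⟨f, rfl | ⟨e, he, rfl⟩, hw⟩
    · exact absurd (Sym2.mem_iff.mp hw) w.2
    · exact ⟨e, he, Sym2.mem_map_subtypeVal.mp hw⟩
  · rintro ⟨e, he, hw⟩
    exact ⟨_, Or.inr ⟨e, he, rfl⟩, Sym2.mem_map_subtypeVal.mpr hw⟩

theorem isMatchingOn_insertEdge_iff (huv : G.Adj u v) {N : Set (Sym2 ({u, v}ᶜ : Set V))} :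
    IsMatchingOn G (insertEdge u v N) ↔ IsMatchingOn (G.induce ({u, v}ᶜ : Set V)) N := by
  constructor
  · rintro ⟨hsub, hdisj⟩
    refine ⟨fun e he ↦ map_subtypeVal_mem_edgeSet_iff.mp (hsub (Or.inr ⟨e, he, rfl⟩)),
      fun e he f hf hef w hwe hwf ↦ ?_⟩
    exact hdisj _ (Or.inr ⟨e, he, rfl⟩) _ (Or.inr ⟨f, hf, rfl⟩)
      (fun h ↦ hef (Sym2.map.injective Subtype.val_injective h)) w
      (Sym2.mem_map_subtypeVal.mpr hwe) (Sym2.mem_map_subtypeVal.mpr hwf)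
  · rintro ⟨hsub, hdisj⟩
    have himage : IsMatchingOn G (Sym2.map Subtype.val '' N) := by
      refine ⟨Set.image_subset_iff.mpr fun e he ↦ map_subtypeVal_mem_edgeSet_iff.mpr (hsub he),
        ?_⟩
      rintro _ ⟨e, he, rfl⟩ _ ⟨f, hf, rfl⟩ hef w hwe hwf
      obtain ⟨a, ha, rfl⟩ := Sym2.mem_map.mp hwe
      exact hdisj e he f hf (ne_of_apply_ne _ hef) a ha (Sym2.mem_map_subtypeVal.mp hwf)
    refine himage.insert huv ?_
    rintro _ ⟨e, -, rfl⟩ w hw hwe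
    obtain ⟨a, -, rfl⟩ := Sym2.mem_map.mp hwe
    exact a.2 (Sym2.mem_iff.mp hw)

theorem isOddMatching_insertEdge_iff (huv : G.Adj u v) {N : Set (Sym2 ({u, v}ᶜ : Set V))} :
    IsOddMatching G (insertEdge u v N) ↔ IsOddMatching (G.induce ({u, v}ᶜ : Set V)) N := by
  refine and_congr (isMatchingOn_insertEdge_iff huv) ⟨?_, ?_⟩
  · rintro ⟨x, hx, hxu⟩
    have hxS := mem_compl_pair_of_not_covers (Set.mem_insert _ _) hx
    exact ⟨⟨x, hxS⟩, covers_insertEdge_iff.not.mp hx,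
      fun w hw ↦ Subtype.ext (hxu w (covers_insertEdge_iff.not.mpr hw))⟩
  · rintro ⟨w, hw, hwu⟩
    refine ⟨w, covers_insertEdge_iff.not.mpr hw, fun x hx ↦ ?_⟩
    have hxS := mem_compl_pair_of_not_covers (Set.mem_insert _ _) hx
    exact congrArg Subtype.val (hwu ⟨x, hxS⟩ (covers_insertEdge_iff.not.mp hx))

theorem isOddMatching_eraseEdge {M : Set (Sym2 V)} (hM : IsOddMatching G M)
    (huvM : s(u, v) ∈ M) : IsOddMatching (G.induce ({u, v}ᶜ : Set V)) (eraseEdge u v M) := by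
  rw [← isOddMatching_insertEdge_iff (hM.1.1 huvM), insertEdge_eraseEdge hM.1 huvM]
  exact hM

theorem flip_insertEdge (huv : G.Adj u v) {N N' : Set (Sym2 ({u, v}ᶜ : Set V))}
    (h : Flip (G.induce ({u, v}ᶜ : Set V)) N N') :
    Flip G (insertEdge u v N) (insertEdge u v N') := by
  obtain ⟨hN, a, b, c, ha, hab, hbc, rfl⟩ := h
  refine ⟨(isOddMatching_insertEdge_iff huv).mpr hN, a, b, c, covers_insertEdge_iff.not.mpr ha,
    map_subtypeVal_mem_edgeSet_iff.mpr hab, Or.inr ⟨_, hbc, rfl⟩, ?_⟩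
  have huv_ne : s(u, v) ∉ ({s(↑b, ↑c)} : Set (Sym2 V)) :=
    (map_subtypeVal_ne_pair s(b, c)).symm
  rw [insertEdge, insertEdge, Set.image_union, Set.image_sdiff (Sym2.map.injective
    Subtype.val_injective), Set.image_singleton, Set.image_singleton,
    Set.insert_sdiff_of_notMem _ huv_ne, Set.insert_union]
  rfl

theorem flip_eraseEdge {M M' : Set (Sym2 V)} (h : Flip G M M') (huvM : s(u, v) ∈ M)
    (huvM' : s(u, v) ∈ M') :
    Flip (G.induce ({u, v}ᶜ : Set V)) (eraseEdge u v M) (eraseEdge u v M') := by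
  obtain ⟨hM, x, y, z, hx, hxy, hyz, rfl⟩ := h
  have hyz_ne : s(y, z) ≠ s(u, v) := by
    intro heq
    rcases huvM' with ⟨-, hne⟩ | hxy_eq
    · exact hne heq.symm
    · exact hx ⟨_, huvM, hxy_eq ▸ Sym2.mem_mk_left x y⟩
  have hxS := mem_compl_pair_of_not_covers huvM hx
  have hyS := hM.1.mem_compl_pair huvM hyz hyz_ne (Sym2.mem_mk_left y z)
  have hzS := hM.1.mem_compl_pair huvM hyz hyz_ne (Sym2.mem_mk_right y z)
  refine ⟨isOddMatching_eraseEdge hM huvM, ⟨x, hxS⟩, ⟨y, hyS⟩, ⟨z, hzS⟩,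
    fun ⟨e, he, hxe⟩ ↦ hx ⟨_, he, Sym2.mem_map_subtypeVal.mpr hxe⟩,
    map_subtypeVal_mem_edgeSet_iff.mp hxy, hyz, ?_⟩
  ext e
  simp only [eraseEdge, Set.preimage_union, Set.preimage_sdiff, Set.mem_union, Set.mem_sdiff,
    Set.mem_preimage, Set.mem_singleton_iff,
    ← (Sym2.map.injective Subtype.val_injective).eq_iff (a := e)]
  rfl

theorem reconfig_insertEdge (huv : G.Adj u v) {N N' : Set (Sym2 ({u, v}ᶜ : Set V))}
    (h : Reconfig (G.induce ({u, v}ᶜ : Set V)) N N') :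
    Reconfig G (insertEdge u v N) (insertEdge u v N') :=
  Relation.ReflTransGen.lift _ (fun _ _ hflip ↦ flip_insertEdge huv hflip) _ _ h

theorem reconfig_eraseEdge (he : ∀ M : Set (Sym2 V), IsOddMatching G M → s(u, v) ∈ M)
    {M M' : Set (Sym2 V)} (h : Reconfig G M M') :
    Reconfig (G.induce ({u, v}ᶜ : Set V)) (eraseEdge u v M) (eraseEdge u v M') :=
  Relation.ReflTransGen.lift _
    (fun _ _ hflip ↦ flip_eraseEdge hflip (he _ hflip.1) (he _ hflip.isOddMatching)) _ _ h

end

theorem stmt3_general {V : Type*} (G : SimpleGraph V) (u v : V) (huv : G.Adj u v)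
    (he : ∀ M : Set (Sym2 V), IsOddMatching G M → s(u, v) ∈ M) :
    Reconfigurable G ↔ Reconfigurable (G.induce ({u, v}ᶜ : Set V)) := by
  constructor
  · intro hG N N' hN hN'
    have hflips := reconfig_eraseEdge he (hG _ _ ((isOddMatching_insertEdge_iff huv).mpr hN)
      ((isOddMatching_insertEdge_iff huv).mpr hN'))
    rwa [eraseEdge_insertEdge, eraseEdge_insertEdge] at hflips
  · intro hH M M' hM hM'
    have hflips := reconfig_insertEdge huv
      (hH _ _ (isOddMatching_eraseEdge hM (he M hM)) (isOddMatching_eraseEdge hM' (he M' hM')))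
    rwa [insertEdge_eraseEdge hM.1 (he M hM), insertEdge_eraseEdge hM'.1 (he M' hM')] at hflips

/-- If the edge `e = uv` of `G` (a finite simple graph of odd order) is contained in
every odd matching of `G`, then `G` is reconfigurable iff `G - u - v` is reconfigurable. -/
theorem stmt3 {V : Type*} [Fintype V] (G : SimpleGraph V)
    (hodd : Odd (Fintype.card V)) (u v : V) (huv : G.Adj u v)
    (he : ∀ M : Set (Sym2 V), IsOddMatching G M → s(u, v) ∈ M) :
    Reconfigurable G ↔ Reconfigurable (G.induce ({u, v}ᶜ : Set V)) :=
  stmt3_general G u v huv he
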